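/- arXiv:1104.1931 — 10 statements merged into one kernel-verified Lean document; each statement's English description precedes it below -/
import Mathlib

section
/- Let p be a prime, and let a, b, n be integers with p ∤ b and n ≥ 1. If p^i divides n!, then p^i divides the product (a+b)(a+2b)⋯(a+nb). -/
/-!
Since `p ∤ b`, the step `b` is invertible modulo `p ^ i`, say `v * b ≡ 1`. Then
`a + k * b ≡ b * (v * a + k)`, so the product is `b ^ n` times a product of `n` consecutive
integers modulo `p ^ i`, and `n!` divides any such product.
-/

open Finset Nat

theorem factorial_dvd_prod_range_add_succ (n : ℕ) (x : ℤ) :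
    (n ! : ℤ) ∣ ∏ j ∈ range n, (x + (j + 1)) := by
  have hdesc : (n ! : ℤ) ∣ (descPochhammer ℤ n).eval (-x - 1) := by
    rw [Polynomial.eval_eq_smeval, Ring.descPochhammer_eq_factorial_smul_choose, nsmul_eq_mul]
    exact dvd_mul_right _ _
  have hprod : ∏ j ∈ range n, (x + (j + 1)) = (-1) ^ n * (descPochhammer ℤ n).eval (-x - 1) :=
    calc ∏ j ∈ range n, (x + (j + 1)) = ∏ j ∈ range n, -(-x - 1 - j) :=
          prod_congr rfl fun j _ => by ring
      _ = _ := by rw [prod_neg, card_range, descPochhammer_eval_eq_prod_range]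
  rw [hprod]
  exact hdesc.mul_left _

theorem dvd_prod_range_add_mul_of_isCoprime {m b : ℤ} (hmb : IsCoprime m b) (a : ℤ) {n : ℕ}
    (hm : m ∣ n !) : m ∣ ∏ j ∈ range n, (a + (j + 1 : ℕ) * b) := by
  obtain ⟨u, v, huv⟩ := hmb
  have hterm (j : ℕ) : a + (j + 1 : ℕ) * b ≡ b * (v * a + (j + 1)) [ZMOD m] :=
    Int.modEq_iff_dvd.mpr ⟨-u * a, by push_cast; linear_combination a * huv⟩
  have hprod : ∏ j ∈ range n, (a + (j + 1 : ℕ) * b) ≡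
      b ^ n * ∏ j ∈ range n, (v * a + (j + 1)) [ZMOD m] := by
    simpa only [prod_mul_distrib, prod_const, card_range] using
      Int.ModEq.prod (s := range n) fun j _ => hterm j
  have hzero : b ^ n * ∏ j ∈ range n, (v * a + (j + 1)) ≡ 0 [ZMOD m] :=
    Int.modEq_zero_iff_dvd.mpr ((hm.trans (factorial_dvd_prod_range_add_succ n _)).mul_left _)
  exact Int.modEq_zero_iff_dvd.mp (hprod.trans hzero)

theorem pow_dvd_arith_prog_product_general (p : ℕ) (hp : p.Prime) (a b : ℤ) (i n : ℕ)
    (hb : ¬ (p : ℤ) ∣ b) (h : (p : ℤ) ^ i ∣ (n.factorial : ℤ)) :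
    (p : ℤ) ^ i ∣ ∏ j ∈ Finset.range n, (a + (j + 1 : ℕ) * b) :=
  have hcop : IsCoprime ((p : ℤ) ^ i) b :=
    ((Nat.prime_iff_prime_int.mp hp).coprime_iff_not_dvd.mpr hb).pow_left
  dvd_prod_range_add_mul_of_isCoprime hcop a h

/-- If `p` is prime, `p ∤ b`, and `p^i ∣ n!`, then `p^i` divides
`(a+b)(a+2b)⋯(a+nb)`. -/
theorem pow_dvd_arith_prog_product (p : ℕ) (hp : p.Prime) (a b : ℤ) (i n : ℕ)
    (hb : ¬ (p : ℤ) ∣ b) (hn : 1 ≤ n) (h : (p : ℤ) ^ i ∣ (n.factorial : ℤ)) :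
    (p : ℤ) ^ i ∣ ∏ j ∈ Finset.range n, (a + (j + 1 : ℕ) * b) :=
  pow_dvd_arith_prog_product_general p hp a b i n hb h
end

section
/- For every integer m and every natural number n, the subring ℤ[1/m] of ℚ is closed under the operation x ↦ x(x-1)⋯(x-n+1)/n!; that is, for every x ∈ ℤ[1/m] (written x = a/f with a an integer and f a power of m), the binomial coefficient (x choose n) = a(a-f)(a-2f)⋯(a-(n-1)f)/(n! f^n) lies in ℤ[1/m]. -/
open Finset

lemma descPochhammer_eval_prod {R : Type*} [CommRing R] (n : ℕ) (r : R) :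
    (descPochhammer R n).eval r = ∏ i ∈ Finset.range n, (r - i) := by
  induction n with
  | zero => simp
  | succ n ih => rw [descPochhammer_succ_eval, ih, Finset.prod_range_succ]

lemma padic_prod_fact (p : ℕ) [Fact p.Prime] (n : ℕ) (X : ℤ_[p]) :
    ∃ C : ℤ_[p], (∏ i ∈ Finset.range n, (X - i)) = (n.factorial : ℤ_[p]) * C := by
  refine ⟨Ring.choose X n, ?_⟩
  have h := Ring.descPochhammer_eq_factorial_smul_choose X n
  rw [← Polynomial.aeval_eq_smeval, ← Polynomial.eval_map_algebraMap,
    descPochhammer_map, descPochhammer_eval_prod] at h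
  rw [h, nsmul_eq_mul]

lemma not_dvd_den_of_padicNorm_le_one {p : ℕ} (hp : p.Prime) {q : ℚ}
    (h : padicNorm p q ≤ 1) : ¬ p ∣ q.den := by
  intro hdvd
  rcases eq_or_ne q 0 with rfl | hq
  · norm_num at hdvd
    exact hp.one_lt.ne' hdvd
  have : Fact p.Prime := ⟨hp⟩
  rw [padicNorm.eq_zpow_of_nonzero hq] at h
  have hv : 0 ≤ padicValRat p q := by
    by_contra hneg
    push_neg at hneg
    have h1 : (1:ℚ) < (p:ℚ) ^ (-padicValRat p q) := by
      apply one_lt_zpow₀ (by exact_mod_cast hp.one_lt) (by omega)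
    linarith
  have hnum : ¬ (p:ℤ) ∣ q.num := by
    intro hd
    have hg := Nat.dvd_gcd (Int.natAbs_dvd_natAbs.mpr hd) hdvd
    rw [Nat.Coprime.gcd_eq_one q.reduced] at hg
    exact hp.one_lt.ne' (Nat.eq_one_of_dvd_one hg)
  rw [padicValRat] at hv
  have h0 : padicValInt p q.num = 0 := padicValInt.eq_zero_of_not_dvd hnum
  have h1 : 1 ≤ padicValNat p q.den :=
    one_le_padicValNat_of_dvd q.den_nz hdvd
  omega

/-- The subring `ℤ[1/m]` of `ℚ` (rationals of the form `a / m^k`) is closed under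
the binomial coefficient operations `x ↦ x(x-1)⋯(x-n+1)/n!`. -/
theorem zinvm_closed_under_binomial (m : ℤ) (n : ℕ) (x : ℚ)
    (hx : ∃ (a : ℤ) (k : ℕ), x * (m : ℚ) ^ k = (a : ℚ)) :
    ∃ (a : ℤ) (k : ℕ),
      ((∏ i ∈ Finset.range n, (x - i)) / (n.factorial : ℚ)) * (m : ℚ) ^ k = (a : ℚ) := by
  obtain ⟨a, k, hx⟩ := hx
  rcases eq_or_ne m 0 with rfl | hm
  · exact ⟨0, 1, by norm_num⟩
  set q : ℚ := (∏ i ∈ Finset.range n, (x - i)) / (n.factorial : ℚ) with hq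
  have key : ∀ p : ℕ, p.Prime → p ∣ q.den → p ∣ m.natAbs := by
    intro p hp hdvd
    by_contra hpm
    have : Fact p.Prime := ⟨hp⟩
    have hpmz : ¬ (p:ℤ) ∣ m := fun h => hpm (Int.natCast_dvd_natCast.mp (Int.dvd_natAbs.mpr h))
    refine not_dvd_den_of_padicNorm_le_one hp ?_ hdvd
    suffices h : ‖((q : ℚ) : ℚ_[p])‖ ≤ 1 by
      rw [Padic.eq_padicNorm] at h
      exact_mod_cast h
    have hmn : ‖((m : ℤ) : ℚ_[p])‖ = 1 :=
      le_antisymm (Padic.norm_int_le_one m)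
        (not_lt.mp (fun h => hpmz ((Padic.norm_intCast_lt_one_iff (k := m)).mp h)))
    have hxnorm : ‖((x : ℚ) : ℚ_[p])‖ ≤ 1 := by
      have hcast : ((x : ℚ) : ℚ_[p]) * ((m : ℤ) : ℚ_[p]) ^ k = ((a : ℤ) : ℚ_[p]) := by
        have := congrArg (fun r : ℚ => (r : ℚ_[p])) hx
        push_cast at this ⊢
        exact this
      have := congrArg (‖·‖) hcast
      simp only [norm_mul, norm_pow, hmn, one_pow, mul_one] at this
      rw [this]
      exact Padic.norm_int_le_one a
    obtain ⟨C, hC⟩ := padic_prod_fact p n ⟨(x : ℚ_[p]), hxnorm⟩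
    have hprod : (∏ i ∈ Finset.range n, (((x : ℚ) : ℚ_[p]) - i))
        = ((n.factorial : ℤ_[p]) * C : ℤ_[p]) := by
      rw [← hC]
      have hcoe : ∀ y : ℤ_[p], (y : ℚ_[p]) = PadicInt.Coe.ringHom y := fun _ => rfl
      rw [hcoe, map_prod]
      refine Finset.prod_congr rfl fun i _ => ?_
      rfl
    have hfac : ((n.factorial : ℚ_[p])) ≠ 0 := by
      exact_mod_cast (Nat.cast_ne_zero (R := ℚ_[p])).mpr n.factorial_ne_zero
    have hqcast : ((q : ℚ) : ℚ_[p]) = (C : ℚ_[p]) := by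
      rw [hq]
      push_cast
      rw [hprod]
      push_cast
      field_simp
    rw [hqcast, ← PadicInt.norm_def]
    exact PadicInt.norm_le_one C
  -- q.den divides a power of |m|
  have hd : q.den ∣ m.natAbs ^ q.den := by
    have h0 : q.den ≠ 0 := q.den_nz
    have hM0 : m.natAbs ≠ 0 := Int.natAbs_ne_zero.mpr hm
    rw [← Nat.factorization_le_iff_dvd h0 (pow_ne_zero _ hM0)]
    rw [Finsupp.le_def]
    intro p
    rcases eq_or_ne (q.den.factorization p) 0 with h | h
    · simp [h]
    have hp : p.Prime := Nat.prime_of_mem_primeFactors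
      (Nat.support_factorization q.den ▸ Finsupp.mem_support_iff.mpr h)
    have hpd : p ∣ q.den := Nat.dvd_of_factorization_pos h
    have hpm : p ∣ m.natAbs := key p hp hpd
    calc q.den.factorization p ≤ q.den := le_of_lt (Nat.factorization_lt p h0)
      _ ≤ q.den * m.natAbs.factorization p :=
          Nat.le_mul_of_pos_right _ (hp.factorization_pos_of_dvd hM0 hpm)
      _ = (m.natAbs ^ q.den).factorization p := by
          rw [Nat.factorization_pow]; simp
  have hdz : (q.den : ℤ) ∣ m ^ q.den := by
    rw [← Int.dvd_natAbs]
    exact_mod_cast Int.natCast_dvd_natCast.mpr (by rwa [← Int.natAbs_pow] at hd)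
  refine ⟨q.num * (m ^ q.den / (q.den : ℤ)), q.den, ?_⟩
  have hden0 : ((q.den : ℤ) : ℚ) ≠ 0 := by exact_mod_cast q.den_nz
  rw [Int.cast_mul, Int.cast_div hdz hden0]
  push_cast
  conv_lhs => rw [← Rat.num_div_den q]
  field_simp
  rw [Rat.num_div_den]
end

section
/- In any binomial ring R, for all a ∈ R and natural numbers m, n: (a choose m)(a choose n) = Σ_{k=0}^{n} (a choose m+k)·(m+k choose n)·(n choose k), where (m+k choose n) and (n choose k) are ordinary integer binomial coefficients. -/
/-!
Write `a = (a - m) + m` and expand `(a choose n)` by Vandermonde's identity into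
`Σ_k (a - m choose k)(m choose n - k)`. Multiplying by `(a choose m)`, each product
`(a choose m)(a - m choose k)` equals `(m + k choose m)(a choose m + k)`, and the integer identity
`(m + k choose m)(m choose n - k) = (m + k choose n)(n choose k)` turns the coefficients into the
stated ones.
-/

open Finset

theorem Nat.add_choose_left_mul_choose_sub {m n k : ℕ} (hkn : k ≤ n) :
    (m + k).choose m * m.choose (n - k) = (m + k).choose n * n.choose k := by
  rw [Nat.choose_mul hkn, Nat.add_sub_cancel, Nat.choose_symm_add]

namespace Ring

variable {R : Type*} [Ring R] [BinomialRing R]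

theorem add_natCast_choose (r : R) (m n : ℕ) :
    choose (r + m) n = ∑ k ∈ range (n + 1), choose r k * (m.choose (n - k) : R) := by
  rw [add_choose_eq n (Nat.cast_commute m r).symm, Nat.sum_antidiagonal_eq_sum_range_succ_mk]
  simp only [choose_natCast]

theorem choose_mul_sub_natCast_choose (a : R) (m k : ℕ) :
    choose a m * choose (a - m) k = ((m + k).choose m : R) * choose a (m + k) := by
  rw [← nsmul_eq_mul, choose_smul_choose a (Nat.le_add_right m k), Nat.add_sub_cancel_left]

end Ring

/-- In a binomial ring, `(a choose m)(a choose n) =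
Σ_{k=0}^{n} (a choose m+k)·(m+k choose n)·(n choose k)`. -/
theorem binomialRing_choose_mul_choose {R : Type*} [CommRing R] [BinomialRing R]
    (a : R) (m n : ℕ) :
    Ring.choose a m * Ring.choose a n =
      ∑ k ∈ Finset.range (n + 1),
        Ring.choose a (m + k) * ((m + k).choose n : R) * (n.choose k : R) := by
  have vandermonde := Ring.add_natCast_choose (a - m) m n
  rw [sub_add_cancel] at vandermonde
  rw [vandermonde, mul_sum]
  refine sum_congr rfl fun k hk => ?_
  have hkn : k ≤ n := Nat.lt_succ_iff.mp (mem_range.mp hk)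
  calc Ring.choose a m * (Ring.choose (a - m) k * (m.choose (n - k) : R))
      = Ring.choose a (m + k) * (((m + k).choose m * m.choose (n - k) : ℕ) : R) := by
        rw [← mul_assoc, Ring.choose_mul_sub_natCast_choose]; push_cast; ring
    _ = Ring.choose a (m + k) * ((m + k).choose n : R) * (n.choose k : R) := by
        rw [Nat.add_choose_left_mul_choose_sub hkn]; push_cast; ring
end

section
/- Let m_1, …, m_k be natural numbers, put m = m_1 + ⋯ + m_k and n = m_1 + 2m_2 + ⋯ + k·m_k. If n is prime, then m divides the multinomial coefficient m!/(m_1!⋯m_k!), unless m_1 = m = n and all other m_i = 0. -/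
/-!
Removing one copy of `a` from the multiset shows `m ∣ m_a · (m; m_1, …, m_k)` for every `a`, hence
`m ∣ gcd(m_1, …, m_k) · (m; m_1, …, m_k)`. The gcd divides both `m` and `n`, so it is `1` or `n`;
in the second case `n ∣ m ≤ n` forces `m = n`, which is the excluded case.
-/

open Finset

namespace Nat

theorem dvd_mul_choose (n k : ℕ) : n ∣ k * n.choose k := by
  rcases n with _ | n
  · rcases k with _ | k <;> simp
  rcases k with _ | k
  · simp
  · exact ⟨n.choose k, by rw [mul_comm, ← add_one_mul_choose_eq]⟩

variable {α : Type*} {s : Finset α} {f : α → ℕ}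

theorem sum_dvd_mul_multinomial {a : α} (ha : a ∈ s) :
    (∑ i ∈ s, f i) ∣ f a * multinomial s f := by
  classical
  rw [← insert_erase ha, multinomial_insert (notMem_erase a s), sum_insert (notMem_erase a s),
    ← mul_assoc]
  exact (dvd_mul_choose _ _).mul_right _

theorem sum_dvd_gcd_mul_multinomial : (∑ i ∈ s, f i) ∣ s.gcd f * multinomial s f := by
  rw [← normalize_eq (multinomial s f), ← Finset.gcd_mul_right]
  exact Finset.dvd_gcd fun a ha => sum_dvd_mul_multinomial ha

end Nat

/-- Let `m = m_1 + ⋯ + m_k` and `n = m_1 + 2m_2 + ⋯ + k·m_k`.  If `n` is prime then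
`m` divides the multinomial coefficient `m!/(m_1!⋯m_k!)`, unless `m_1 = m = n` and all
other `m_i = 0`. -/
theorem dvd_multinomial_of_prime (k : ℕ) (f : Fin k → ℕ)
    (m n : ℕ) (hm : m = ∑ i, f i) (hn : n = ∑ i : Fin k, (i.val + 1) * f i)
    (hprime : n.Prime)
    (hexc : ¬ (m = n ∧ ∀ i : Fin k, 0 < i.val → f i = 0)) :
    m ∣ Nat.multinomial Finset.univ f := by
  have hn_eq : n = m + ∑ i : Fin k, i.val * f i := by
    simp only [hn, hm, add_mul, one_mul, sum_add_distrib, add_comm]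
  have hgcd_m : univ.gcd f ∣ m := hm ▸ dvd_sum fun i _ => gcd_dvd (mem_univ i)
  have hgcd_n : univ.gcd f ∣ n := hn ▸ dvd_sum fun i _ => (gcd_dvd (mem_univ i)).mul_left _
  rcases (Nat.dvd_prime hprime).mp hgcd_n with hgcd | hgcd
  · simpa only [hgcd, one_mul, ← hm] using Nat.sum_dvd_gcd_mul_multinomial (s := univ) (f := f)
  have hm_pos : 0 < m := by
    refine Nat.pos_of_ne_zero fun hm0 => hprime.ne_zero ?_
    have hf : ∀ i, f i = 0 := fun i => (sum_eq_zero_iff.mp (hm ▸ hm0)) i (mem_univ i)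
    simp [hn, hf]
  have hm_eq : m = n := le_antisymm (by omega) (Nat.le_of_dvd hm_pos (hgcd ▸ hgcd_m))
  refine absurd ⟨hm_eq, fun i hi => ?_⟩ hexc
  have hweight : ∑ i : Fin k, i.val * f i = 0 := by omega
  exact (Nat.mul_eq_zero.mp (sum_eq_zero_iff.mp hweight i (mem_univ i))).resolve_left hi.ne'
end

section
/- In a commutative ring equipped with operations (− choose n) satisfying the five numerical axioms (Vandermonde for sums, the product formula for (ab choose n), the product-of-binomials formula, (1 choose n) = 0 for n ≥ 2, and (a choose 0) = 1, (a choose 1) = a), if n·r = 0 for some r in the ring and n, m ∈ ℕ, then m·n·(r choose m) = 0. -/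
/-!
Axiom III with `n = 1` gives `a·(a choose m) = m·(a choose m) + (m+1)·(a choose m+1)`.
Multiplying by `n` kills the left side when `n·a = 0`, so by induction on `m` each
`m·n·(a choose m)` vanishes.
-/

/-- A numerical ring (Ekedahl): a commutative unital ring with unary binomial coefficient
operations satisfying axioms I–V. -/
structure NumericalRing (R : Type*) [CommRing R] where
  /-- The binomial coefficient operations `a ↦ (a choose n)`. -/
  choose : R → ℕ → R
  /-- Axiom I (Vandermonde): `(a+b choose n) = Σ_{p+q=n} (a choose p)(b choose q)`. -/
  axiom_I : ∀ a b : R, ∀ n : ℕ, choose (a + b) n =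
    ∑ pq ∈ Finset.HasAntidiagonal.antidiagonal n, choose a pq.1 * choose b pq.2
  /-- Axiom II: `(ab choose n) = Σ_{m=0}^{n} (a choose m)
    Σ_{q_1+⋯+q_m=n, q_i ≥ 1} (b choose q_1)⋯(b choose q_m)`. -/
  axiom_II : ∀ a b : R, ∀ n : ℕ, choose (a * b) n =
    ∑ m ∈ Finset.range (n + 1), choose a m *
      ∑ q ∈ (Finset.Nat.antidiagonalTuple m n).filter (fun q => ∀ i, 1 ≤ q i),
        ∏ i, choose b (q i)
  /-- Axiom III: `(a choose m)(a choose n) =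
    Σ_{k=0}^{n} (a choose m+k)(m+k choose n)(n choose k)`. -/
  axiom_III : ∀ a : R, ∀ m n : ℕ, choose a m * choose a n =
    ∑ k ∈ Finset.range (n + 1), choose a (m + k) * ((m + k).choose n : R) * (n.choose k : R)
  /-- Axiom IV: `(1 choose n) = 0` for `n ≥ 2`. -/
  axiom_IV : ∀ n : ℕ, 2 ≤ n → choose 1 n = 0
  /-- Axiom V: `(a choose 0) = 1`. -/
  axiom_V0 : ∀ a : R, choose a 0 = 1
  /-- Axiom V: `(a choose 1) = a`. -/
  axiom_V1 : ∀ a : R, choose a 1 = a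

namespace NumericalRing

variable {R : Type*} [CommRing R] (N : NumericalRing R)

theorem mul_choose (a : R) (m : ℕ) :
    a * N.choose a m = m • N.choose a m + (m + 1) • N.choose a (m + 1) := by
  have h := N.axiom_III a m 1
  simp only [N.axiom_V1, Finset.sum_range_succ, Finset.sum_range_zero, Nat.choose_one_right,
    Nat.choose_self, Nat.choose_zero_right, add_zero, zero_add, Nat.cast_one, mul_one] at h
  rw [mul_comm, h, nsmul_eq_mul, nsmul_eq_mul]
  push_cast
  ring

end NumericalRing

/-- In a numerical ring, if `n·r = 0` then `m·n·(r choose m) = 0`. -/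
theorem numericalRing_smul_choose_eq_zero {R : Type*} [CommRing R] (N : NumericalRing R)
    (r : R) (n m : ℕ) (h : n • r = 0) :
    (m * n) • N.choose r m = 0 := by
  induction m with
  | zero => simp
  | succ m ih =>
    have hr : n • (r * N.choose r m) = 0 := by rw [← smul_mul_assoc, h, zero_mul]
    rw [N.mul_choose, smul_add, smul_smul, mul_comm n m, ih, zero_add, smul_smul] at hr
    rwa [mul_comm]
end

section
/- Every numerical ring (a commutative unital ring with binomial coefficient operations satisfying axioms I–V) is torsion-free as a ℤ-module. -/
lemma Finset.Nat.lt_of_mem_antidiagonalTuple {m n : ℕ} {q : Fin m → ℕ}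
    (hq : q ∈ Finset.Nat.antidiagonalTuple m n) (hpos : ∀ i, q i ≠ 0) (hm : 2 ≤ m) (i : Fin m) :
    q i < n := by
  rw [Finset.Nat.mem_antidiagonalTuple] at hq
  obtain ⟨j, hji⟩ := Fintype.exists_ne_of_one_lt_card (by rw [Fintype.card_fin]; omega) i
  have hij := Finset.add_le_sum (fun _ _ => Nat.zero_le _) (Finset.mem_univ i)
    (Finset.mem_univ j) hji.symm (f := q)
  have hj := hpos j
  omega

lemma Nat.Prime.pow_dvd_prod_choose {p m : ℕ} (hp : p.Prime) {q : Fin m → ℕ}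
    (hq : ∀ i, q i ≠ 0 ∧ q i < p) : p ^ m ∣ ∏ i, p.choose (q i) := by
  simpa using Finset.prod_dvd_prod_of_dvd (s := Finset.univ) (fun _ => p) _
    fun i _ => hp.dvd_choose_self (hq i).1 (hq i).2

lemma eq_zero_of_nsmul_eq_zero_of_coprime {M : Type*} [AddMonoid M] {a b : ℕ}
    (hab : a.Coprime b) {x : M} (ha : a • x = 0) (hb : b • x = 0) : x = 0 :=
  AddMonoid.addOrderOf_eq_one_iff.mp <|
    Nat.eq_one_of_dvd_coprimes hab (addOrderOf_dvd_of_nsmul_eq_zero ha)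
      (addOrderOf_dvd_of_nsmul_eq_zero hb)

/-- The inner sum of axiom II at `b = k`, once `(k choose q) = Nat.choose k q` is known. -/
def compositionChooseSum (k n m : ℕ) : ℕ :=
  ∑ q ∈ (Finset.Nat.antidiagonalTuple m n).filter (fun q => ∀ i, 1 ≤ q i), ∏ i, k.choose (q i)

lemma compositionChooseSum_zero {k n : ℕ} (hn : n ≠ 0) : compositionChooseSum k n 0 = 0 := by
  simp [compositionChooseSum, Finset.eq_empty_iff_forall_notMem,
    Finset.Nat.mem_antidiagonalTuple, hn.symm]

lemma compositionChooseSum_one {k n : ℕ} (hn : n ≠ 0) :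
    compositionChooseSum k n 1 = k.choose n := by
  simp [compositionChooseSum, Finset.Nat.antidiagonalTuple_one, Finset.filter_singleton,
    Nat.one_le_iff_ne_zero.mpr hn]

lemma Nat.Prime.sq_dvd_compositionChooseSum {p m : ℕ} (hp : p.Prime) (hm : 2 ≤ m) :
    p ^ 2 ∣ compositionChooseSum p p m :=
  Finset.dvd_sum fun q hq => by
    rw [Finset.mem_filter] at hq
    have hpos : ∀ i, q i ≠ 0 := fun i => Nat.one_le_iff_ne_zero.mp (hq.2 i)
    exact (pow_dvd_pow p hm).trans <| hp.pow_dvd_prod_choose fun i =>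
      ⟨hpos i, Finset.Nat.lt_of_mem_antidiagonalTuple hq.1 hpos hm i⟩

namespace NumericalRing

open PowerSeries

variable {R : Type*} [CommRing R] (N : NumericalRing R)

def chooseSeries (a : R) : R⟦X⟧ := PowerSeries.mk (N.choose a)

lemma chooseSeries_add (a b : R) :
    N.chooseSeries (a + b) = N.chooseSeries a * N.chooseSeries b := by
  ext n
  simp [chooseSeries, coeff_mul, N.axiom_I]

lemma chooseSeries_zero : N.chooseSeries 0 = 1 := by
  have hunit : IsUnit (N.chooseSeries 0) := by
    rw [isUnit_iff_constantCoeff, ← coeff_zero_eq_constantCoeff_apply]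
    simp [chooseSeries, N.axiom_V0]
  have hidem := N.chooseSeries_add 0 0
  rw [add_zero] at hidem
  exact hunit.mul_eq_left.mp hidem.symm

lemma chooseSeries_one : N.chooseSeries 1 = 1 + X := by
  ext n
  rcases n with _ | _ | n
  · simp [chooseSeries, N.axiom_V0]
  · simp [chooseSeries, N.axiom_V1]
  · simp [chooseSeries, N.axiom_IV, coeff_X]

lemma chooseSeries_natCast (k : ℕ) : N.chooseSeries k = (1 + X) ^ k := by
  induction k with
  | zero => simpa using N.chooseSeries_zero
  | succ k ih => rw [Nat.cast_succ, chooseSeries_add, ih, chooseSeries_one, pow_succ]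

lemma choose_natCast (k j : ℕ) : N.choose k j = k.choose j := by
  have h := congrArg (coeff j) (N.chooseSeries_natCast k)
  rw [show (1 + X : R⟦X⟧) = ((1 + Polynomial.X : Polynomial R) : R⟦X⟧) by simp,
    ← Polynomial.coe_pow, Polynomial.coeff_coe, Polynomial.coeff_one_add_X_pow] at h
  simpa [chooseSeries] using h

lemma choose_mul_natCast (a : R) (k n : ℕ) :
    N.choose (a * k) n =
      ∑ m ∈ Finset.range (n + 1), N.choose a m * compositionChooseSum k n m := by
  simp [N.axiom_II, compositionChooseSum, N.choose_natCast]

lemma succ_mul_choose_succ (a : R) (n : ℕ) :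
    ((n : R) + 1) * N.choose a (n + 1) = (a - n) * N.choose a n := by
  rcases n with _ | n
  · simp [N.axiom_V0, N.axiom_V1]
  -- axiom III with `m = 1`: only the terms `k = n - 1` and `k = n` survive
  have h := N.axiom_III a 1 (n + 1)
  rw [N.axiom_V1, Finset.sum_range_succ, Finset.sum_range_succ,
    Finset.sum_eq_zero fun k hk => by
      rw [Nat.choose_eq_zero_of_lt (by simp at hk; omega), Nat.cast_zero, mul_zero, zero_mul],
    add_comm 1 n, add_comm 1 (n + 1), Nat.choose_self, Nat.choose_succ_self_right,
    Nat.choose_succ_self_right] at h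
  push_cast at h ⊢
  linear_combination -h

lemma factorial_mul_choose (a : R) (m : ℕ) :
    (m.factorial : R) * N.choose a m = (descPochhammer R m).eval a := by
  induction m with
  | zero => simp [N.axiom_V0]
  | succ m ih =>
    rw [descPochhammer_succ_eval, ← ih, Nat.factorial_succ]
    push_cast
    linear_combination (m.factorial : R) * N.succ_mul_choose_succ a m

lemma dvd_factorial_mul_choose (a : R) {m : ℕ} (hm : m ≠ 0) :
    a ∣ (m.factorial : R) * N.choose a m := by
  obtain ⟨m, rfl⟩ := Nat.exists_eq_succ_of_ne_zero hm
  rw [factorial_mul_choose, descPochhammer_succ_left, Polynomial.eval_mul, Polynomial.eval_X]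
  exact dvd_mul_right a _

theorem eq_zero_of_prime_nsmul_eq_zero (N : NumericalRing R) {p : ℕ} (hp : p.Prime) {x : R}
    (h : p • x = 0) : x = 0 := by
  have hp2 := hp.two_le
  have hpx : (p : R) * x = 0 := by rwa [← nsmul_eq_mul]
  have hII : ∑ m ∈ Finset.range (p + 1), N.choose x m * compositionChooseSum p p m = 0 := by
    rw [← choose_mul_natCast, mul_comm, hpx, ← Nat.cast_zero, N.choose_natCast,
      Nat.choose_eq_zero_of_lt hp.pos, Nat.cast_zero]
  have hterm : ∀ m ∈ Finset.Ico 2 (p + 1),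
      ((p - 1).factorial : R) * (N.choose x m * compositionChooseSum p p m) = 0 := by
    intro m hm
    rw [Finset.mem_Ico] at hm
    obtain ⟨d, hd⟩ := hp.sq_dvd_compositionChooseSum hm.1
    obtain ⟨t, ht⟩ := Nat.factorial_dvd_factorial (Nat.lt_succ_iff.mp hm.2)
    obtain ⟨y, hy⟩ := N.dvd_factorial_mul_choose x (m := m) (by omega)
    have hpt : ((p * (p - 1).factorial : ℕ) : R) = (m.factorial * t : ℕ) :=
      congrArg Nat.cast ((Nat.mul_factorial_pred hp.ne_zero).trans ht)
    rw [hd]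
    push_cast at hpt ⊢
    -- `(p - 1)! p² = p · p! = p · t · m!`, and `m! (x choose m) = x y`
    linear_combination (p * d * N.choose x m) * hpt + (p * d * t) * hy + (d * t * y) * hpx
  have hfac : (p - 1).factorial • x = 0 := by
    rw [Finset.range_eq_Ico, Finset.sum_eq_sum_Ico_succ_bot (by omega),
      Finset.sum_eq_sum_Ico_succ_bot (by omega), compositionChooseSum_zero hp.ne_zero,
      compositionChooseSum_one hp.ne_zero, Nat.choose_self, N.axiom_V1] at hII
    have hscaled := congrArg (((p - 1).factorial : R) * ·) hII
    simp only [mul_add, Finset.mul_sum, Finset.sum_eq_zero hterm] at hscaled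
    simpa [nsmul_eq_mul] using hscaled
  exact eq_zero_of_nsmul_eq_zero_of_coprime
    (hp.coprime_factorial_of_lt (Nat.sub_lt hp.pos one_pos)) h hfac

end NumericalRing

/-- Numerical rings are torsion-free. -/
theorem numericalRing_torsionFree {R : Type*} [CommRing R] (N : NumericalRing R)
    (n : ℕ) (r : R) (hn : 0 < n) (h : n • r = 0) : r = 0 := by
  induction n using Nat.recOnMul generalizing r with
  | zero => exact absurd hn (lt_irrefl 0)
  | one => simpa using h
  | prime p hp => exact N.eq_zero_of_prime_nsmul_eq_zero hp h
  | mul a b iha ihb =>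
    rw [mul_nsmul'] at h
    exact ihb r (Nat.pos_of_mul_pos_left hn) (iha _ (Nat.pos_of_mul_pos_right hn) h)
end

section
/- Let R be a commutative unital ring and I an ideal such that I is a ℚ-vector space (i.e., uniquely divisible) and R/I is a binomial ring. Then R is a binomial ring and I is a binomial ideal of R. -/
open Finset Nat Polynomial

-- A field of `BinomialRing` that Mathlib deliberately does not make a global instance.
attribute [local instance] BinomialRing.toIsAddTorsionFree

theorem Ring.factorial_mul_choose_eq_prod {S : Type*} [CommRing S] [BinomialRing S] (x : S)
    (n : ℕ) : (n ! : S) * Ring.choose x n = ∏ i ∈ range n, (x - i) := by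
  rw [← nsmul_eq_mul, ← Ring.descPochhammer_eq_factorial_smul_choose, ← aeval_eq_smeval,
    ← eval_map_algebraMap, descPochhammer_map, descPochhammer_eval_eq_prod_range]

theorem AddMonoidHom.eq_zero_of_nsmul_eq_zero {M N : Type*} [AddGroup M] [AddGroup N]
    [IsAddTorsionFree N] (f : M →+ N)
    (hker : ∀ x, f x = 0 → ∀ n : ℕ, 0 < n → n • x = 0 → x = 0)
    {n : ℕ} (hn : 0 < n) {x : M} (hx : n • x = 0) : x = 0 := by
  have hfx : n • f x = n • 0 := by rw [← map_nsmul, hx, map_zero, smul_zero]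
  exact hker x (nsmul_right_injective hn.ne' hfx) n hn hx

/-- An arbitrary lift of `Ring.choose` is off by an element of `I`, which can be divided by `n!`
inside `I`. -/
theorem Ideal.exists_lift_choose {R : Type*} [CommRing R] (I : Ideal R)
    (hdiv : ∀ x ∈ I, ∀ n : ℕ, 0 < n → ∃ y ∈ I, n • y = x) [BinomialRing (R ⧸ I)]
    (r : R) (n : ℕ) :
    ∃ c : R, (n ! : R) * c = ∏ i ∈ range n, (r - i) ∧
      Ideal.Quotient.mk I c = Ring.choose (Ideal.Quotient.mk I r) n := by
  obtain ⟨c₀, hc₀⟩ := Ideal.Quotient.mk_surjective (Ring.choose (Ideal.Quotient.mk I r) n)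
  have hdefect : (n ! : R) * c₀ - ∏ i ∈ range n, (r - i) ∈ I := by
    rw [← Ideal.Quotient.eq_zero_iff_mem]
    simp only [map_sub, map_mul, map_prod, map_natCast, hc₀, Ring.factorial_mul_choose_eq_prod,
      sub_self]
  obtain ⟨y, hyI, hy⟩ := hdiv _ hdefect n ! n.factorial_pos
  refine ⟨c₀ - y, ?_, ?_⟩
  · rw [mul_sub, ← nsmul_eq_mul n ! y, hy, sub_sub_cancel]
  · rw [map_sub, hc₀, Ideal.Quotient.eq_zero_iff_mem.mpr hyI, sub_zero]

/-- Let `I` be an ideal of a commutative ring `R` which is a `ℚ`-vector space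
(uniquely divisible), and suppose `R/I` is a binomial ring.  Then `R` is itself a
binomial ring (torsion-free and closed under binomial coefficients) and `I` is a
binomial ideal. -/
theorem binomial_of_quotient_binomial {R : Type*} [CommRing R] (I : Ideal R)
    (hdiv : ∀ x ∈ I, ∀ n : ℕ, 0 < n → ∃ y ∈ I, n • y = x)
    (htfI : ∀ x ∈ I, ∀ n : ℕ, 0 < n → n • x = 0 → x = 0)
    [BinomialRing (R ⧸ I)] :
    (∀ (n : ℕ) (r : R), 0 < n → n • r = 0 → r = 0) ∧
    ∃ bc : R → ℕ → R,
      (∀ (r : R) (n : ℕ),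
        (n.factorial : R) * bc r n = ∏ i ∈ Finset.range n, (r - (i : ℕ))) ∧
      (∀ e ∈ I, ∀ n : ℕ, 0 < n → bc e n ∈ I) := by
  refine ⟨fun n r hn hr => (Ideal.Quotient.mk I).toAddMonoidHom.eq_zero_of_nsmul_eq_zero
    (fun x hx => htfI x (Ideal.Quotient.eq_zero_iff_mem.mp hx)) hn hr, ?_⟩
  choose bc hprod hmk using I.exists_lift_choose hdiv
  refine ⟨bc, hprod, fun e he n hn => ?_⟩
  rw [← Ideal.Quotient.eq_zero_iff_mem, hmk, Ideal.Quotient.eq_zero_iff_mem.mpr he,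
    Ring.choose_zero_pos _ hn]
end

section
/- Let φ : R → S be a ring homomorphism from a binomial ring R to a ring S whose underlying additive group is torsion-free. Then the kernel of φ is a binomial ideal: (r choose n) ∈ ker φ for every r ∈ ker φ and n > 0. -/
/-! For `n > 0`, `n! • (r choose n)` is the falling factorial `r (r - 1) ⋯ (r - n + 1)`, the value
at `r` of an integer polynomial without constant term. Applying `φ` and using `φ r = 0` gives
`n! • φ (r choose n) = 0`, and torsion-freeness of `S` cancels `n!`. -/

open Polynomial

theorem RingHom.map_smeval_int {R S : Type*} [Ring R] [Ring S] (φ : R →+* S) (p : ℤ[X]) (r : R) :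
    φ (p.smeval r) = p.smeval (φ r) := by
  simp only [smeval_eq_sum, Polynomial.smul_pow, Polynomial.sum, map_sum, map_zsmul, map_pow]

theorem descPochhammer_smeval_zero {S : Type*} [Ring S] {n : ℕ} (hn : n ≠ 0) :
    (descPochhammer ℤ n).smeval (0 : S) = 0 := by
  rw [smeval_at_zero, coeff_zero_eq_eval_zero, descPochhammer_ne_zero_eval_zero (R := ℤ) hn,
    zero_smul]

theorem Ring.factorial_nsmul_map_choose {R S : Type*} [Ring R] [BinomialRing R] [Ring S]
    (φ : R →+* S) (r : R) (n : ℕ) :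
    n.factorial • φ (Ring.choose r n) = (descPochhammer ℤ n).smeval (φ r) := by
  rw [← map_nsmul, ← Ring.descPochhammer_eq_factorial_smul_choose, φ.map_smeval_int]

/-- If `φ : R → S` is a ring homomorphism from a binomial ring `R` to a ring `S` whose
additive group is torsion-free, then `ker φ` is a binomial ideal:
`(r choose n) ∈ ker φ` for every `r ∈ ker φ` and `n > 0`. -/
theorem ker_is_binomial_ideal {R S : Type*} [CommRing R] [BinomialRing R] [Ring S]
    (htf : ∀ (n : ℕ) (s : S), 0 < n → n • s = 0 → s = 0)
    (φ : R →+* S) (r : R) (hr : r ∈ RingHom.ker φ) (n : ℕ) (hn : 0 < n) :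
    Ring.choose r n ∈ RingHom.ker φ := by
  rw [RingHom.mem_ker] at hr ⊢
  apply htf n.factorial _ n.factorial_pos
  rw [Ring.factorial_nsmul_map_choose, hr, descPochhammer_smeval_zero hn.ne']
end

section
/- Let R be a torsion-free commutative unital ring that is finitely generated as an abelian group. Then every non-zero-divisor of R is invertible in ℚ ⊗ R; i.e., the total fraction ring of R is ℚ ⊗ R. -/
open scoped TensorProduct nonZeroDivisors

/-!
Multiplication by a non-zero-divisor `r` is an injective endomorphism of `R`; since `ℚ` is flat
over `ℤ`, it stays injective after tensoring, so `1 ⊗ r` is a non-zero-divisor of `ℚ ⊗ R`. The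
latter is a finite-dimensional `ℚ`-algebra, hence Artinian, and in an Artinian ring every
non-zero-divisor is a unit.
-/

namespace Algebra.TensorProduct

theorem lTensor_mulLeft {R A B : Type*} [CommSemiring R] [Semiring A] [Semiring B] [Algebra R A]
    [Algebra R B] (b : B) :
    ⇑((LinearMap.mulLeft R b).lTensor A) = ((1 : A) ⊗ₜ[R] b * ·) := by
  funext x
  induction x using TensorProduct.induction_on with
  | zero => simp
  | tmul a c => simp
  | add x y hx hy => simp only [map_add, hx, hy, mul_add]

theorem one_tmul_mem_nonZeroDivisors {R A B : Type*} [CommRing R] [CommRing A] [CommRing B]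
    [Algebra R A] [Algebra R B] [Module.Flat R A] {b : B} (hb : b ∈ B⁰) :
    (1 : A) ⊗ₜ[R] b ∈ (A ⊗[R] B)⁰ := by
  rw [← isRegular_iff_mem_nonZeroDivisors, ← isLeftRegular_iff_isRegular] at hb ⊢
  rw [IsLeftRegular, ← lTensor_mulLeft]
  exact Module.Flat.lTensor_preserves_injective_linearMap _ hb

end Algebra.TensorProduct

theorem fraction_ring_of_fg_torsionfree_general (R : Type*) [CommRing R]
    [Module.Finite ℤ R]
    (r : R) (hr : r ∈ nonZeroDivisors R) :
    IsUnit ((1 : ℚ) ⊗ₜ[ℤ] r : ℚ ⊗[ℤ] R) :=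
  have : IsArtinianRing (ℚ ⊗[ℤ] R) := IsArtinianRing.of_finite ℚ _
  IsArtinianRing.isUnit_of_mem_nonZeroDivisors
    (Algebra.TensorProduct.one_tmul_mem_nonZeroDivisors hr)

/-- If a commutative ring `R` is torsion-free and finitely generated as an abelian group,
then every non-zero-divisor of `R` becomes invertible in `ℚ ⊗ R`; that is, the total
fraction ring of `R` is `ℚ ⊗ R`. -/
theorem fraction_ring_of_fg_torsionfree (R : Type*) [CommRing R]
    (htf : ∀ (n : ℕ) (r : R), 0 < n → n • r = 0 → r = 0)
    [Module.Finite ℤ R]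
    (r : R) (hr : r ∈ nonZeroDivisors R) :
    IsUnit ((1 : ℚ) ⊗ₜ[ℤ] r : ℚ ⊗[ℤ] R) :=
  fraction_ring_of_fg_torsionfree_general R r hr
end

section
/- If R is a binomial ring, then for every prime p and every a ∈ R, Fermat's Little Theorem holds: a^p ≡ a (mod pR). -/
/-!
Modulo `p`, the falling factorial `X (X - 1) ⋯ (X - p + 1)` has every residue as a root, so it
equals `X ^ p - X` in `𝔽_p[X]`. Hence `a ^ p - a` differs from `a (a - 1) ⋯ (a - p + 1)` by a
multiple of `p`, and in a binomial ring the latter is `p! • choose a p`, also a multiple of `p`.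
-/

open Polynomial

theorem Polynomial.C_dvd_iff_map_zmod_eq_zero (n : ℕ) (f : ℤ[X]) :
    C (n : ℤ) ∣ f ↔ f.map (Int.castRingHom (ZMod n)) = 0 := by
  rw [C_dvd_iff_dvd_coeff, Polynomial.ext_iff]
  simp [coeff_map, ZMod.intCast_zmod_eq_zero_iff_dvd]

theorem descPochhammer_zmod_eq_X_pow_sub_X (p : ℕ) [Fact p.Prime] :
    descPochhammer (ZMod p) p = X ^ p - X := by
  have hp : p.Prime := Fact.out
  have hdesc : IsMonicOfDegree (descPochhammer (ZMod p) p) p :=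
    ⟨descPochhammer_natDegree _ p, monic_descPochhammer _ p⟩
  have hfrob : IsMonicOfDegree (X ^ p - X : (ZMod p)[X]) p :=
    (isMonicOfDegree_X_pow _ p).sub (by simpa using hp.one_lt)
  rw [← sub_eq_zero]
  refine eq_zero_of_natDegree_lt_card_of_eval_eq_zero _ Function.injective_id (fun x => ?_)
    (by simpa using hdesc.natDegree_sub_lt hp.ne_zero hfrob)
  have hroot : (descPochhammer (ZMod p) p).eval x = 0 := by
    rw [← ZMod.natCast_zmod_val x]
    exact descPochhammer_eval_coe_nat_of_lt (ZMod.val_lt x)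
  simp [hroot, ZMod.pow_card]

theorem C_dvd_X_pow_sub_X_sub_descPochhammer (p : ℕ) [Fact p.Prime] :
    C (p : ℤ) ∣ X ^ p - X - descPochhammer ℤ p := by
  rw [C_dvd_iff_map_zmod_eq_zero]
  simp [descPochhammer_map, descPochhammer_zmod_eq_X_pow_sub_X]

theorem Ring.factorial_dvd_aeval_descPochhammer {R : Type*} [CommRing R] [BinomialRing R]
    (r : R) (n : ℕ) : (n.factorial : R) ∣ aeval r (descPochhammer ℤ n) :=
  ⟨Ring.choose r n, by
    rw [aeval_eq_smeval, Ring.descPochhammer_eq_factorial_smul_choose, nsmul_eq_mul]⟩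

/-- Fermat's Little Theorem in a binomial ring: `a^p ≡ a (mod pR)` for every prime `p`. -/
theorem binomialRing_fermat_little {R : Type*} [CommRing R] [BinomialRing R]
    (p : ℕ) (hp : p.Prime) (a : R) :
    a ^ p - a ∈ Ideal.span ({(p : R)} : Set R) := by
  have : Fact p.Prime := ⟨hp⟩
  obtain ⟨q, hq⟩ := C_dvd_X_pow_sub_X_sub_descPochhammer p
  have hfrob : (p : R) ∣ aeval a (X ^ p - X - descPochhammer ℤ p) :=
    ⟨aeval a q, by rw [hq, map_mul, aeval_C, algebraMap_int_eq, eq_intCast, Int.cast_natCast]⟩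
  have hdesc : (p : R) ∣ aeval a (descPochhammer ℤ p) :=
    (Nat.cast_dvd_cast (Nat.dvd_factorial hp.pos le_rfl)).trans
      (Ring.factorial_dvd_aeval_descPochhammer a p)
  rw [Ideal.mem_span_singleton]
  simpa using dvd_add hfrob hdesc
end
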